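/- For every real p with |p| ≥ ω, every ω ≥ 0, and every β with |β| ≤ 2π/3, the real part of p_{iβ}(p)² satisfies Re p_{iβ}(p)² ≥ p² cos(2β) + 2ω² sin²(β). -/

import Mathlib

open Real Complex

/-!
Write `p = a + b` with `a = sgn p · ω` and `b = p - a`, so that `p_{iβ} = a + e^{iβ} b`,
`a² = ω²` and `a b = ω (|p| - ω) ≥ 0`. Expanding, the claimed inequality becomes
`2ab cos(2β) ≤ 2ab cos β`, and `cos β - cos(2β) = (1 - cos β)(1 + 2 cos β) ≥ 0`
because `cos β ≥ -1/2` for `|β| ≤ 2π/3`.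
-/

lemma re_sq_ofReal_add_exp_mul_I_mul (a b β : ℝ) :
    (((a : ℂ) + exp (β * I) * b) ^ 2).re = (a + b * Real.cos β) ^ 2 - (b * Real.sin β) ^ 2 := by
  rw [exp_mul_I, ← ofReal_cos, ← ofReal_sin]
  simp only [sq, mul_re, add_re, add_im, mul_im, ofReal_re, ofReal_im, I_re, I_im]
  ring

lemma neg_half_le_cos_of_abs_le_two_pi_div_three {β : ℝ} (hβ : |β| ≤ 2 * π / 3) : -(1 / 2) ≤ Real.cos β := by
  have hcos : Real.cos (2 * π / 3) = -(1 / 2) := by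
    rw [show 2 * π / 3 = π - π / 3 by ring, Real.cos_pi_sub, Real.cos_pi_div_three]
  rw [← hcos, ← Real.cos_abs β]
  exact Real.cos_le_cos_of_nonneg_of_le_pi (abs_nonneg β) (by linarith [pi_pos]) hβ

lemma cos_two_mul_le_cos_of_abs_le_two_pi_div_three {β : ℝ} (hβ : |β| ≤ 2 * π / 3) :
    Real.cos (2 * β) ≤ Real.cos β := by
  have hfactor : Real.cos β - Real.cos (2 * β) = (1 - Real.cos β) * (1 + 2 * Real.cos β) := by
    rw [Real.cos_two_mul]; ring
  have := mul_nonneg (sub_nonneg.2 (Real.cos_le_one β))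
    (by linarith [neg_half_le_cos_of_abs_le_two_pi_div_three hβ] : 0 ≤ 1 + 2 * Real.cos β)
  linarith

lemma sq_add_mul_cos_two_mul_le_re_sq {a b β : ℝ} (hab : 0 ≤ a * b)
    (hβ : Real.cos (2 * β) ≤ Real.cos β) :
    (a + b) ^ 2 * Real.cos (2 * β) + 2 * a ^ 2 * Real.sin β ^ 2 ≤
      (((a : ℂ) + exp (β * I) * b) ^ 2).re := by
  have hexpand : (((a : ℂ) + exp (β * I) * b) ^ 2).re -
      ((a + b) ^ 2 * Real.cos (2 * β) + 2 * a ^ 2 * Real.sin β ^ 2) =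
      2 * (a * b) * (Real.cos β - Real.cos (2 * β)) := by
    rw [re_sq_ofReal_add_exp_mul_I_mul, Real.cos_two_mul]
    linear_combination (-2 * a ^ 2 - b ^ 2) * Real.sin_sq_add_cos_sq β
  nlinarith [mul_nonneg hab (sub_nonneg.2 hβ)]

lemma sign_mul_sq_of_le_abs {ω p : ℝ} (hω : 0 ≤ ω) (hp : ω ≤ |p|) :
    (Real.sign p * ω) ^ 2 = ω ^ 2 := by
  rcases Real.sign_apply_eq p with h | h | h
  · rw [h]; ring
  · have hp0 : p = 0 := Real.sign_eq_zero_iff.1 h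
    rw [hp0, abs_zero] at hp
    rw [le_antisymm hp hω]; ring
  · rw [h]; ring

lemma sign_mul_mul_sub_sign_mul_nonneg {ω p : ℝ} (hω : 0 ≤ ω) (hp : ω ≤ |p|) :
    0 ≤ Real.sign p * ω * (p - Real.sign p * ω) := by
  rcases lt_trichotomy p 0 with h | h | h
  · rw [Real.sign_of_neg h]; rw [abs_of_neg h] at hp; nlinarith
  · simp [h]
  · rw [Real.sign_of_pos h]; rw [abs_of_pos h] at hp; nlinarith

/-- For `|p| ≥ ω`, `ω ≥ 0`, `|β| ≤ 2π/3`: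
`Re p_{iβ}(p)² ≥ p² cos(2β) + 2ω² sin²(β)`. -/
theorem exterior_scaled_momentum_re_sq_lower_bound
    (ω β p : ℝ) (hβ : |β| ≤ 2 * π / 3) (hω : 0 ≤ ω) (hp : ω ≤ |p|)
    (pb : ℂ)
    (hpb : pb = ((Real.sign p * ω : ℝ) : ℂ) +
        Complex.exp (β * Complex.I) * ((p : ℂ) - ((Real.sign p * ω : ℝ) : ℂ))) :
    p ^ 2 * Real.cos (2 * β) + 2 * ω ^ 2 * Real.sin β ^ 2 ≤ (pb ^ 2).re := by
  have key := sq_add_mul_cos_two_mul_le_re_sq (sign_mul_mul_sub_sign_mul_nonneg hω hp)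
    (cos_two_mul_le_cos_of_abs_le_two_pi_div_three hβ)
  rwa [sign_mul_sq_of_le_abs hω hp, add_sub_cancel, ofReal_sub, ← hpb] at key
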